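/- Hard look-ahead strengthening is not idempotent: there exist an initial gossip graph G and a syntactic protocol P with P^■(G) ≠ (P^■)^■(G). Concretely, for P = LNS and G the 'N' graph on agents {0,1,2,3} with N the reflexive closure of {(3,1),(3,0),(2,0)} and S the identity: the one-call sequence 30 belongs to LNS^■(G) but not to (LNS^■)^■(G); indeed LNS^■(G) = {ε, 30} while (LNS^■)^■(G) = {ε}. -/

import Mathlib

set_option maxHeartbeats 1000000

structure GossipGraph (A : Type) : Type where
  N : A → A → Prop
  S : A → A → Prop
  refl_S : ∀ a, S a a
  S_sub_N : ∀ a b, S a b → N a b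

namespace Gossip

variable {A : Type}

def Initial (G : GossipGraph A) : Prop := ∀ a b, G.S a b ↔ a = b

def doCall (G : GossipGraph A) (c : A × A) : GossipGraph A where
  N x y := G.N x y ∨ ((x = c.1 ∨ x = c.2) ∧ (G.N c.1 y ∨ G.N c.2 y))
  S x y := G.S x y ∨ ((x = c.1 ∨ x = c.2) ∧ (G.S c.1 y ∨ G.S c.2 y))
  refl_S a := Or.inl (G.refl_S a)
  S_sub_N a b h := by
    rcases h with h | ⟨h1, h2 | h2⟩
    · exact Or.inl (G.S_sub_N a b h)
    · exact Or.inr ⟨h1, Or.inl (G.S_sub_N _ _ h2)⟩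
    · exact Or.inr ⟨h1, Or.inr (G.S_sub_N _ _ h2)⟩

def doCalls (G : GossipGraph A) (σ : List (A × A)) : GossipGraph A :=
  σ.foldl doCall G

def PossibleSeq (G : GossipGraph A) : List (A × A) → Prop
  | [] => True
  | c :: σ => c.1 ≠ c.2 ∧ G.N c.1 c.2 ∧ PossibleSeq (doCall G c) σ

mutual
  inductive Form (A : Type) : Type where
    | top : Form A
    | atomN : A → A → Form A
    | atomS : A → A → Form A
    | neg : Form A → Form A
    | conj : Form A → Form A → Form A
    | K : A → (A → A → Form A) → Form A → Form A
    | box : Prog A → Form A → Form A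
  inductive Prog (A : Type) : Type where
    | test : Form A → Prog A
    | call : A → A → Prog A
    | seq : Prog A → Prog A → Prog A
    | cup : Prog A → Prog A → Prog A
    | star : Prog A → Prog A
end

abbrev Protocol (A : Type) := A → A → Form A

inductive Epi (G : GossipGraph A) (perm : List (A × A) → (A × A) → Prop) (a : A) :
    List (A × A) → List (A × A) → Prop where
  | refl : Epi G perm a [] []
  | call_out {σ τ : List (A × A)} {b : A} :
      Epi G perm a σ τ →
      (∀ x, (doCalls G σ).N b x ↔ (doCalls G τ).N b x) →
      (∀ x, (doCalls G σ).S b x ↔ (doCalls G τ).S b x) →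
      perm σ (a, b) → perm τ (a, b) →
      Epi G perm a (σ ++ [(a, b)]) (τ ++ [(a, b)])
  | call_in {σ τ : List (A × A)} {b : A} :
      Epi G perm a σ τ →
      (∀ x, (doCalls G σ).N b x ↔ (doCalls G τ).N b x) →
      (∀ x, (doCalls G σ).S b x ↔ (doCalls G τ).S b x) →
      perm σ (b, a) → perm τ (b, a) →
      Epi G perm a (σ ++ [(b, a)]) (τ ++ [(b, a)])
  | other {σ τ : List (A × A)} {c d e f : A} :
      Epi G perm a σ τ →
      c ≠ a → d ≠ a → e ≠ a → f ≠ a →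
      perm σ (c, d) → perm τ (e, f) →
      Epi G perm a (σ ++ [(c, d)]) (τ ++ [(e, f)])

mutual
  def Sat (G : GossipGraph A) : List (A × A) → Form A → Prop
    | _, Form.top => True
    | σ, Form.atomN a b => (doCalls G σ).N a b
    | σ, Form.atomS a b => (doCalls G σ).S a b
    | σ, Form.neg φ => ¬ Sat G σ φ
    | σ, Form.conj φ ψ => Sat G σ φ ∧ Sat G σ ψ
    | σ, Form.K a P φ =>
        ∀ τ, Epi G (fun ρ c => c.1 ≠ c.2 ∧ (doCalls G ρ).N c.1 c.2 ∧ Sat G ρ (P c.1 c.2)) a τ σ →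
          Sat G τ φ
    | σ, Form.box π φ => ∀ τ, ProgRel G π σ τ → Sat G τ φ
  def ProgRel (G : GossipGraph A) : Prog A → List (A × A) → List (A × A) → Prop
    | Prog.test φ, σ, τ => σ = τ ∧ Sat G σ φ
    | Prog.call a b, σ, τ => a ≠ b ∧ (doCalls G σ).N a b ∧ τ = σ ++ [(a, b)]
    | Prog.seq π π', σ, τ => ∃ ρ, ProgRel G π σ ρ ∧ ProgRel G π' ρ τ
    | Prog.cup π π', σ, τ => ProgRel G π σ τ ∨ ProgRel G π' σ τ
    | Prog.star π, σ, τ => Relation.ReflTransGen (fun x y => ProgRel G π x y) σ τ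
end


/-- A call `ab` is `P`-permitted at `(G, σ)` iff `a ≠ b`, `N^σ a b` and `G,σ ⊨ P_{ab}`. -/
def Permits (G : GossipGraph A) (P : Protocol A) (σ : List (A × A)) (c : A × A) : Prop :=
  c.1 ≠ c.2 ∧ (doCalls G σ).N c.1 c.2 ∧ Sat G σ (P c.1 c.2)

/-- The least set of call sequences containing `ε` and closed under adding permitted calls. -/
inductive Ext (G : GossipGraph A) (perm : List (A × A) → (A × A) → Prop) : List (A × A) → Prop where
  | nil : Ext G perm []
  | snoc {σ : List (A × A)} {c : A × A} : Ext G perm σ → perm σ c → Ext G perm (σ ++ [c])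

/-- The extension of a syntactic protocol `P` on an (initial) gossip graph `G`. -/
def extension (P : Protocol A) (G : GossipGraph A) : Set (List (A × A)) :=
  { σ | Ext G (Permits G P) σ }

/-- A formula is valid iff it is true at every gossip state, i.e. at every pair of an
initial gossip graph and a call sequence possible on it. -/
def Valid (φ : Form A) : Prop :=
  ∀ G : GossipGraph A, Initial G → ∀ σ : List (A × A), PossibleSeq G σ → Sat G σ φ

def impF (φ ψ : Form A) : Form A := Form.neg (Form.conj φ (Form.neg ψ))
def orF (φ ψ : Form A) : Form A := Form.neg (Form.conj (Form.neg φ) (Form.neg ψ))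
def iffF (φ ψ : Form A) : Form A := Form.conj (impF φ ψ) (impF ψ φ)
/-- The epistemic "possibility" dual `K̂ := ¬K¬`. -/
def hatK (a : A) (P : Protocol A) (φ : Form A) : Form A := Form.neg (Form.K a P (Form.neg φ))

/-- A semantic protocol, as raw data: a map from (initial) gossip graphs to sets of call
sequences. -/
abbrev RawSem (A : Type) := GossipGraph A → Set (List (A × A))

/-- For a semantic protocol, a call `c` is permitted at `(G,σ)` iff `σ;c ∈ P(G)`. -/
def semPerm (Q : RawSem A) (G : GossipGraph A) (σ : List (A × A)) (c : A × A) : Prop :=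
  σ ++ [c] ∈ Q G

/-- `σ` is terminal (in `Q(G)`) iff no further call is permitted. -/
def TerminalIn (Q : RawSem A) (G : GossipGraph A) (σ : List (A × A)) : Prop :=
  ∀ c : A × A, σ ++ [c] ∉ Q G

/-- All agents are experts: everyone knows all secrets. -/
def AllExpert (G : GossipGraph A) : Prop := ∀ a b : A, G.S a b

/-- A semantic protocol: assigns to each initial gossip graph a set of call sequences
possible on it, containing the empty sequence and closed under prefixes. -/
structure SemProtocol (A : Type) : Type where
  ext : GossipGraph A → Set (List (A × A))
  nil_mem : ∀ G : GossipGraph A, Initial G → [] ∈ ext G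
  prefix_closed : ∀ G : GossipGraph A, Initial G → ∀ σ c, σ ++ [c] ∈ ext G → σ ∈ ext G
  possible : ∀ G : GossipGraph A, Initial G → ∀ σ ∈ ext G, PossibleSeq G σ

/-- A semantic protocol is epistemic iff a call `ab` is permitted at `(G,σ)` exactly when it
is permitted at all states that agent `a` cannot distinguish from `(G,σ)`. -/
def SemEpistemic (Q : RawSem A) : Prop :=
  ∀ G : GossipGraph A, Initial G → ∀ σ ∈ Q G, ∀ a b : A, a ≠ b →
    (σ ++ [(a, b)] ∈ Q G ↔ ∀ τ, Epi G (semPerm Q G) a τ σ → τ ++ [(a, b)] ∈ Q G)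

/-- Relabelling the agents of a gossip graph along a permutation. -/
def mapGraph (J : Equiv.Perm A) (G : GossipGraph A) : GossipGraph A where
  N x y := G.N (J.symm x) (J.symm y)
  S x y := G.S (J.symm x) (J.symm y)
  refl_S a := G.refl_S _
  S_sub_N a b h := G.S_sub_N _ _ h

/-- Relabelling a call sequence, callwise. -/
def mapSeq (J : Equiv.Perm A) (σ : List (A × A)) : List (A × A) :=
  σ.map (fun c => (J c.1, J c.2))

mutual
  /-- Relabelling the agents in a formula along a permutation. -/
  def mapForm (J : Equiv.Perm A) : Form A → Form A
    | Form.top => Form.top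
    | Form.atomN a b => Form.atomN (J a) (J b)
    | Form.atomS a b => Form.atomS (J a) (J b)
    | Form.neg φ => Form.neg (mapForm J φ)
    | Form.conj φ ψ => Form.conj (mapForm J φ) (mapForm J ψ)
    | Form.K a P φ => Form.K (J a) (fun x y => mapForm J (P (J.symm x) (J.symm y))) (mapForm J φ)
    | Form.box π φ => Form.box (mapProg J π) (mapForm J φ)
  /-- Relabelling the agents in a program along a permutation. -/
  def mapProg (J : Equiv.Perm A) : Prog A → Prog A
    | Prog.test φ => Prog.test (mapForm J φ)
    | Prog.call a b => Prog.call (J a) (J b)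
    | Prog.seq π π' => Prog.seq (mapProg J π) (mapProg J π')
    | Prog.cup π π' => Prog.cup (mapProg J π) (mapProg J π')
    | Prog.star π => Prog.star (mapProg J π)
end

/-- A semantic protocol is symmetric iff it commutes with relabelling of the agents. -/
def SemSymmetric (Q : RawSem A) : Prop :=
  ∀ (J : Equiv.Perm A) (G : GossipGraph A), Initial G →
    Q (mapGraph J G) = mapSeq J '' Q G

def listConj (l : List (Form A)) : Form A := l.foldr Form.conj Form.top
def listDisj (l : List (Form A)) : Form A := l.foldr orF (Form.neg Form.top)

noncomputable def pairsList (A : Type) [Fintype A] : List (A × A) := (Finset.univ : Finset (A × A)).toList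
noncomputable def distinctPairs (A : Type) [Fintype A] [DecidableEq A] : List (A × A) :=
  (pairsList A).filter (fun c => decide (c.1 ≠ c.2))

/-- The formula `Ex`: all agents are experts. -/
noncomputable def ExForm (A : Type) [Fintype A] : Form A :=
  listConj ((pairsList A).map (fun c => Form.atomS c.1 c.2))

/-- `Ex ∨ ⋁_{i≠j} (N_ij ∧ P_ij)`. -/
noncomputable def oneStepBody (A : Type) [Fintype A] [DecidableEq A] (P : Protocol A) : Form A :=
  orF (ExForm A) (listDisj ((distinctPairs A).map (fun c => Form.conj (Form.atomN c.1 c.2) (P c.1 c.2))))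

/-- Hard one-step strengthening: `P_ab ∧ K_a^P [ab](Ex ∨ ⋁_{i≠j}(N_ij ∧ P_ij))`. -/
noncomputable def hardOneStep {A : Type} [Fintype A] [DecidableEq A] (P : Protocol A) : Protocol A :=
  fun a b => Form.conj (P a b) (Form.K a P (Form.box (Prog.call a b) (oneStepBody A P)))

/-- Soft one-step strengthening: `P_ab ∧ K̂_a^P [ab](Ex ∨ ⋁_{i≠j}(N_ij ∧ P_ij))`. -/
noncomputable def softOneStep {A : Type} [Fintype A] [DecidableEq A] (P : Protocol A) : Protocol A :=
  fun a b => Form.conj (P a b) (hatK a P (Form.box (Prog.call a b) (oneStepBody A P)))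

/-- The protocol `P` as a program:
`(⋃_{a≠b} ?(N_ab ∧ P_ab);ab)* ; ?⋀_{a≠b} ¬(N_ab ∧ P_ab)`. -/
noncomputable def protProg (A : Type) [Fintype A] [DecidableEq A] (P : Protocol A) : Prog A :=
  Prog.seq
    (Prog.star (((distinctPairs A).map (fun c =>
      Prog.seq (Prog.test (Form.conj (Form.atomN c.1 c.2) (P c.1 c.2))) (Prog.call c.1 c.2))).foldr
        Prog.cup (Prog.test (Form.neg Form.top))))
    (Prog.test (listConj ((distinctPairs A).map (fun c =>
      Form.neg (Form.conj (Form.atomN c.1 c.2) (P c.1 c.2))))))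

/-- Hard look-ahead strengthening: `P_ab ∧ K_a^P [ab]⟨P⟩Ex`. -/
noncomputable def hardLookAhead {A : Type} [Fintype A] [DecidableEq A] (P : Protocol A) : Protocol A :=
  fun a b => Form.conj (P a b)
    (Form.K a P (Form.box (Prog.call a b)
      (Form.neg (Form.box (protProg A P) (Form.neg (ExForm A))))))

/-- Soft look-ahead strengthening: `P_ab ∧ K̂_a^P [ab]⟨P⟩Ex`. -/
noncomputable def softLookAhead {A : Type} [Fintype A] [DecidableEq A] (P : Protocol A) : Protocol A :=
  fun a b => Form.conj (P a b)
    (hatK a P (Form.box (Prog.call a b)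
      (Form.neg (Form.box (protProg A P) (Form.neg (ExForm A))))))

/-- Hard uniform backward defoliation of a semantic protocol. -/
def HUBD (Q : RawSem A) : RawSem A := fun G =>
  { σ | σ ∈ Q G ∧ (σ = [] ∨ ∃ τ : List (A × A), ∃ a b : A, σ = τ ++ [(a, b)] ∧
      ∀ τ', Epi G (semPerm Q G) a τ' τ →
        (τ' ++ [(a, b)] ∈ Q G ∧ TerminalIn Q G (τ' ++ [(a, b)])) →
          AllExpert (doCalls G (τ' ++ [(a, b)]))) }

/-- Soft uniform backward defoliation of a semantic protocol. -/
def SUBD (Q : RawSem A) : RawSem A := fun G =>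
  { σ | σ ∈ Q G ∧ (σ = [] ∨ ∃ τ : List (A × A), ∃ a b : A, σ = τ ++ [(a, b)] ∧
      ∃ τ', Epi G (semPerm Q G) a τ' τ ∧
        ((τ' ++ [(a, b)] ∈ Q G ∧ TerminalIn Q G (τ' ++ [(a, b)])) →
          AllExpert (doCalls G (τ' ++ [(a, b)])))) }

/-- The syntactic protocol LNS: `LNS_ab := ¬ S_ab`. -/
def LNSsyn (A : Type) : Protocol A := fun a b => Form.neg (Form.atomS a b)

/-- LNS-permitted: call `ab` permitted at `(G,σ)` iff `N^σ a b` and not `S^σ a b`. -/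
def LNSperm (G : GossipGraph A) (σ : List (A × A)) (c : A × A) : Prop :=
  c.1 ≠ c.2 ∧ (doCalls G σ).N c.1 c.2 ∧ ¬ (doCalls G σ).S c.1 c.2

/-- LNS as a semantic protocol. -/
def LNSsem : RawSem A := fun G => { σ | Ext G (LNSperm G) σ }

/-- A semantic protocol is strongly successful on `G` iff every terminal sequence makes
all agents experts. -/
def StronglySuccessfulOn (Q : RawSem A) (G : GossipGraph A) : Prop :=
  ∀ σ ∈ Q G, TerminalIn Q G σ → AllExpert (doCalls G σ)

/-- A semantic protocol is weakly successful on `G` iff some terminal sequence makes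
all agents experts. -/
def WeaklySuccessfulOn (Q : RawSem A) (G : GossipGraph A) : Prop :=
  ∃ σ ∈ Q G, TerminalIn Q G σ ∧ AllExpert (doCalls G σ)


/-- The "N" initial gossip graph on agents 0,1,2,3:
`N` is the reflexive closure of {(3,1),(3,0),(2,0)} and `S` is the identity. -/
def nGraph : GossipGraph (Fin 4) where
  N x y := x = y ∨ (x = 3 ∧ y = 1) ∨ (x = 3 ∧ y = 0) ∨ (x = 2 ∧ y = 0)
  S x y := x = y
  refl_S a := rfl
  S_sub_N a b h := Or.inl h

/-!
On the N graph, LNS can still make everyone an expert after the call 30 (for instance by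
30;20;01;31;21), but not after 31 or after 20; since at the initial state every agent knows the
actual state, `LNS^■` permits exactly 30 there. After 30 it permits nothing: each of the callers
3, 0 and 2 considers possible a state from which its call leads to failure (3 and 0 the actual one,
2, who took no part in the call 30, the state after 31). So under `LNS^■` the sequence 30 is
terminal without everyone being an expert, and `(LNS^■)^■` therefore forbids even 30.

That LNS fails from the handful of states involved is decided by exhaustive search on a Boolean
copy of the gossip graph; the search terminates because every LNS call teaches its caller a new
secret.
-/

section Semantics

variable {A : Type} {G : GossipGraph A} {P : Protocol A}

def PermittedStep (G : GossipGraph A) (P : Protocol A) (σ τ : List (A × A)) : Prop :=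
  ∃ c, Permits G P σ c ∧ τ = σ ++ [c]

def HasSuccessfulContinuation (G : GossipGraph A) (P : Protocol A) (σ : List (A × A)) : Prop :=
  ∃ τ, Relation.ReflTransGen (PermittedStep G P) σ τ ∧ (∀ c, ¬ Permits G P τ c) ∧
    AllExpert (doCalls G τ)

lemma doCalls_append_singleton (σ : List (A × A)) (c : A × A) :
    doCalls G (σ ++ [c]) = doCall (doCalls G σ) c := by
  simp [doCalls]

lemma HasSuccessfulContinuation.allExpert_of_terminal {σ : List (A × A)}
    (h : HasSuccessfulContinuation G P σ) (hσ : ∀ c, ¬ Permits G P σ c) :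
    AllExpert (doCalls G σ) := by
  obtain ⟨τ, hrun, -, hτ⟩ := h
  rcases hrun.cases_head with rfl | ⟨_, ⟨c, hc, -⟩, -⟩
  · exact hτ
  · exact absurd hc (hσ c)

lemma sat_listConj {σ : List (A × A)} {l : List (Form A)} :
    Sat G σ (listConj l) ↔ ∀ φ ∈ l, Sat G σ φ := by
  induction l with
  | nil => simp [listConj, Sat]
  | cons φ l ih => simp [listConj, Sat, ← ih]

lemma progRel_foldr_cup {σ τ : List (A × A)} (l : List (Prog A)) (π : Prog A) :
    ProgRel G (l.foldr Prog.cup π) σ τ ↔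
      (∃ p ∈ l, ProgRel G p σ τ) ∨ ProgRel G π σ τ := by
  induction l with
  | nil => simp
  | cons p l ih => simp [ProgRel, ih, or_assoc]

lemma sat_box_call {σ : List (A × A)} {a b : A} {φ : Form A} :
    Sat G σ (Form.box (Prog.call a b) φ) ↔
      (a ≠ b → (doCalls G σ).N a b → Sat G (σ ++ [(a, b)]) φ) := by
  simp only [Sat, ProgRel]
  exact ⟨fun h hab hN => h _ ⟨hab, hN, rfl⟩,
    fun h τ ⟨hab, hN, hτ⟩ => hτ ▸ h hab hN⟩

variable [Fintype A]

lemma sat_ExForm {σ : List (A × A)} : Sat G σ (ExForm A) ↔ AllExpert (doCalls G σ) := by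
  simp only [ExForm, sat_listConj, List.forall_mem_map]
  simp [pairsList, Sat, AllExpert]

variable [DecidableEq A]

lemma mem_distinctPairs (c : A × A) : c ∈ distinctPairs A ↔ c.1 ≠ c.2 := by
  simp [distinctPairs, pairsList]

lemma progRel_protProg_iff {σ τ : List (A × A)} :
    ProgRel G (protProg A P) σ τ ↔
      Relation.ReflTransGen (PermittedStep G P) σ τ ∧ ∀ c, ¬ Permits G P τ c := by
  have hstep : (fun σ τ => ProgRel G (((distinctPairs A).map fun c =>
      Prog.seq (Prog.test (Form.conj (Form.atomN c.1 c.2) (P c.1 c.2))) (Prog.call c.1 c.2)).foldr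
        Prog.cup (Prog.test (Form.neg Form.top))) σ τ) = PermittedStep G P := by
    ext σ τ
    simp only [progRel_foldr_cup, List.mem_map, mem_distinctPairs, ne_eq, Prod.exists,
      ↓existsAndEq, and_true, ProgRel, Sat, true_and, not_true_eq_false, and_false, or_false,
      PermittedStep, Permits]
    grind
  simp only [protProg, ProgRel, hstep, sat_listConj, List.forall_mem_map, mem_distinctPairs]
  simp [Sat, Permits]

lemma sat_diamond_protProg_ExForm {σ : List (A × A)} :
    Sat G σ (Form.neg (Form.box (protProg A P) (Form.neg (ExForm A)))) ↔
      HasSuccessfulContinuation G P σ := by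
  simp [Sat, progRel_protProg_iff, sat_ExForm, HasSuccessfulContinuation]

lemma permits_hardLookAhead_iff {σ : List (A × A)} {a b : A} :
    Permits G (hardLookAhead P) σ (a, b) ↔ Permits G P σ (a, b) ∧
      ∀ τ, Epi G (Permits G P) a τ σ → (doCalls G τ).N a b →
        HasSuccessfulContinuation G P (τ ++ [(a, b)]) := by
  simp only [Permits, hardLookAhead]
  rw [Sat, Sat]
  simp only [sat_box_call, sat_diamond_protProg_ExForm]
  exact ⟨fun ⟨hab, hN, hP, h⟩ => ⟨⟨hab, hN, hP⟩, fun τ hτ => h τ hτ hab⟩,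
    fun ⟨⟨hab, hN, hP⟩, h⟩ => ⟨hab, hN, hP, fun τ hτ _ => h τ hτ⟩⟩

lemma not_permits_hardLookAhead_of_epi {σ τ : List (A × A)} {a b : A}
    (hτ : Epi G (Permits G P) a τ σ) (hN : (doCalls G τ).N a b)
    (hfail : ¬ HasSuccessfulContinuation G P (τ ++ [(a, b)])) :
    ¬ Permits G (hardLookAhead P) σ (a, b) :=
  fun h => hfail ((permits_hardLookAhead_iff.1 h).2 τ hτ hN)

end Semantics

section Extension

variable {A : Type} {G : GossipGraph A} {P : Protocol A}

lemma eq_nil_of_epi_nil {perm : List (A × A) → A × A → Prop} {a : A} {τ : List (A × A)}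
    (h : Epi G perm a τ []) : τ = [] := by
  generalize hσ : ([] : List (A × A)) = σ at h
  cases h <;> simp_all

lemma append_singleton_mem_extension_iff {σ : List (A × A)} {c : A × A} :
    σ ++ [c] ∈ extension P G ↔ σ ∈ extension P G ∧ Permits G P σ c := by
  refine ⟨fun h => ?_, fun ⟨hσ, hc⟩ => Ext.snoc hσ hc⟩
  generalize hτ : σ ++ [c] = τ at h
  cases h with
  | nil => simp at hτ
  | snoc hσ hc =>
    obtain ⟨rfl, rfl⟩ := List.append_singleton_inj.1 hτ
    exact ⟨hσ, hc⟩

lemma extension_eq_singleton_nil (h : ∀ c, ¬ Permits G P [] c) : extension P G = {[]} := by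
  ext σ
  induction σ using List.reverseRecOn with
  | nil => exact iff_of_true Ext.nil (by simp)
  | append_singleton σ c ih =>
    simp only [append_singleton_mem_extension_iff, ih, Set.mem_singleton_iff]
    refine iff_of_false ?_ (by simp)
    rintro ⟨rfl, hc⟩
    exact h c hc

lemma extension_eq_pair {c₀ : A × A} (h₀ : ∀ c, Permits G P [] c ↔ c = c₀)
    (h₁ : ∀ c, ¬ Permits G P [c₀] c) : extension P G = {[], [c₀]} := by
  ext σ
  induction σ using List.reverseRecOn with
  | nil => exact iff_of_true Ext.nil (by simp)
  | append_singleton σ c ih =>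
    simp only [append_singleton_mem_extension_iff, ih, Set.mem_insert_iff, Set.mem_singleton_iff]
    constructor
    · rintro ⟨rfl | rfl, hc⟩
      · simp [(h₀ c).1 hc]
      · exact absurd hc (h₁ c)
    · rintro (h | h)
      · simp at h
      · obtain ⟨rfl, rfl⟩ := List.append_singleton_inj.1 (h.trans (List.nil_append _).symm)
        exact ⟨Or.inl rfl, (h₀ _).2 rfl⟩

end Extension

structure BoolGraph (A : Type) where
  N : A → A → Bool
  S : A → A → Bool

namespace BoolGraph

variable {A : Type}

def Represents (m : BoolGraph A) (G : GossipGraph A) : Prop :=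
  (∀ a b, G.N a b ↔ m.N a b) ∧ (∀ a b, G.S a b ↔ m.S a b)

def allExpert [Fintype A] (m : BoolGraph A) : Bool := decide (∀ a b, m.S a b)

lemma Represents.allExpert_iff [Fintype A] {m : BoolGraph A} {G : GossipGraph A}
    (hm : m.Represents G) : AllExpert G ↔ m.allExpert = true := by
  simp [AllExpert, allExpert, hm.2]

def secretCount [Fintype A] (m : BoolGraph A) : ℕ :=
  (Finset.univ.filter fun c : A × A => m.S c.1 c.2).card

lemma secretCount_le [Fintype A] (m : BoolGraph A) : m.secretCount ≤ Fintype.card (A × A) :=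
  Finset.card_filter_le _ _

variable [DecidableEq A]

def call (m : BoolGraph A) (c : A × A) : BoolGraph A where
  N x y := m.N x y || ((x == c.1 || x == c.2) && (m.N c.1 y || m.N c.2 y))
  S x y := m.S x y || ((x == c.1 || x == c.2) && (m.S c.1 y || m.S c.2 y))

def lnsPermits (m : BoolGraph A) (c : A × A) : Bool :=
  c.1 != c.2 && m.N c.1 c.2 && !m.S c.1 c.2

lemma Represents.call {m : BoolGraph A} {G : GossipGraph A} (hm : m.Represents G) (c : A × A) :
    (m.call c).Represents (doCall G c) := by
  obtain ⟨hN, hS⟩ := hm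
  constructor <;> intro a b <;> simp [doCall, BoolGraph.call, hN, hS]

lemma Represents.foldl_call {m : BoolGraph A} {G : GossipGraph A} (hm : m.Represents G)
    (σ : List (A × A)) : (σ.foldl BoolGraph.call m).Represents (doCalls G σ) := by
  induction σ generalizing G m with
  | nil => exact hm
  | cons c σ ih => exact ih (hm.call c)

lemma Represents.permits_lns_iff {m : BoolGraph A} {G : GossipGraph A} {σ : List (A × A)}
    (hm : m.Represents (doCalls G σ)) (c : A × A) :
    Permits G (LNSsyn A) σ c ↔ m.lnsPermits c = true := by
  simp [Permits, LNSsyn, Sat, lnsPermits, hm.1, hm.2, and_assoc]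

lemma Represents.secretCount_lt_call [Fintype A] {m : BoolGraph A} {G : GossipGraph A}
    (hm : m.Represents G) {c : A × A} (hc : m.lnsPermits c = true) :
    m.secretCount < (m.call c).secretCount := by
  have hnew : m.S c.1 c.2 = false := by simp_all [lnsPermits]
  have hrefl : m.S c.2 c.2 = true := (hm.2 c.2 c.2).1 (G.refl_S c.2)
  apply Finset.card_lt_card
  rw [Finset.ssubset_iff_of_subset]
  · exact ⟨c, by simp [BoolGraph.call, hrefl], by simp [hnew]⟩
  · intro x
    simp only [Finset.mem_filter, Finset.mem_univ, true_and, BoolGraph.call]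
    intro hx
    simp [hx]

variable [Fintype A]

def lnsSearch : ℕ → BoolGraph A → Bool
  | 0, _ => false
  | f + 1, m =>
    if ∀ c, m.lnsPermits c = false then m.allExpert
    else decide (∃ c, m.lnsPermits c = true ∧ lnsSearch f (m.call c) = true)

variable {G : GossipGraph A} {σ : List (A × A)} {m : BoolGraph A}

lemma Represents.hasSuccessfulContinuation_of_lnsSearch (hm : m.Represents (doCalls G σ))
    {f : ℕ} (h : m.lnsSearch f = true) : HasSuccessfulContinuation G (LNSsyn A) σ := by
  induction f generalizing σ m with
  | zero => simp [lnsSearch] at h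
  | succ f ih =>
    rw [lnsSearch] at h
    split_ifs at h with hterm
    · exact ⟨σ, .refl, fun c => by simp [hm.permits_lns_iff, hterm c], hm.allExpert_iff.2 h⟩
    · obtain ⟨c, hc, hsearch⟩ := of_decide_eq_true h
      have hm' := hm.call c
      rw [← doCalls_append_singleton] at hm'
      obtain ⟨τ, hrun, hτ⟩ := ih hm' hsearch
      exact ⟨τ, .head ⟨c, (hm.permits_lns_iff c).2 hc, rfl⟩ hrun, hτ⟩

lemma Represents.lnsSearch_of_hasSuccessfulContinuation (hm : m.Represents (doCalls G σ))
    {f : ℕ} (hf : Fintype.card (A × A) < f + m.secretCount)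
    (h : HasSuccessfulContinuation G (LNSsyn A) σ) : m.lnsSearch f = true := by
  induction f generalizing σ m with
  | zero => exact absurd hf (by simpa using m.secretCount_le)
  | succ f ih =>
    obtain ⟨τ, hrun, hterm, hex⟩ := h
    rw [lnsSearch]
    rcases hrun.cases_head with rfl | ⟨_, ⟨c, hc, rfl⟩, hrun⟩
    · rw [if_pos fun c => by simpa [hm.permits_lns_iff] using hterm c]
      exact hm.allExpert_iff.1 hex
    · have hc' := (hm.permits_lns_iff c).1 hc
      rw [if_neg fun h => by simp [h c] at hc']
      have hm' := hm.call c
      rw [← doCalls_append_singleton] at hm'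
      have hcount := hm.secretCount_lt_call hc'
      exact decide_eq_true ⟨c, hc', ih hm' (by omega) ⟨τ, hrun, hterm, hex⟩⟩

theorem Represents.hasSuccessfulContinuation_lns_iff (hm : m.Represents (doCalls G σ)) :
    HasSuccessfulContinuation G (LNSsyn A) σ ↔
      m.lnsSearch (Fintype.card (A × A) + 1) = true :=
  ⟨hm.lnsSearch_of_hasSuccessfulContinuation (by omega),
    hm.hasSuccessfulContinuation_of_lnsSearch⟩

end BoolGraph

def nGraphBool : BoolGraph (Fin 4) where
  N x y := decide (x = y ∨ (x = 3 ∧ y = 1) ∨ (x = 3 ∧ y = 0) ∨ (x = 2 ∧ y = 0))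
  S x y := decide (x = y)

lemma represents_doCalls_nGraph (σ : List (Fin 4 × Fin 4)) :
    (σ.foldl BoolGraph.call nGraphBool).Represents (doCalls nGraph σ) :=
  BoolGraph.Represents.foldl_call (by constructor <;> simp [nGraph, nGraphBool]) σ

lemma permits_lns_nGraph_nil_iff (c : Fin 4 × Fin 4) :
    Permits nGraph (LNSsyn (Fin 4)) [] c ↔ c = (3, 1) ∨ c = (3, 0) ∨ c = (2, 0) := by
  rw [(represents_doCalls_nGraph []).permits_lns_iff]
  revert c
  decide

lemma permits_lns_nGraph_30_iff (c : Fin 4 × Fin 4) :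
    Permits nGraph (LNSsyn (Fin 4)) [(3, 0)] c ↔ c = (3, 1) ∨ c = (0, 1) ∨ c = (2, 0) := by
  rw [(represents_doCalls_nGraph _).permits_lns_iff]
  revert c
  decide

lemma hasSuccessfulContinuation_lns_nGraph_iff (σ : List (Fin 4 × Fin 4)) :
    HasSuccessfulContinuation nGraph (LNSsyn (Fin 4)) σ ↔
      (σ.foldl BoolGraph.call nGraphBool).lnsSearch 17 = true :=
  (represents_doCalls_nGraph σ).hasSuccessfulContinuation_lns_iff

lemma permits_hardLookAhead_lns_nGraph_nil_iff (c : Fin 4 × Fin 4) :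
    Permits nGraph (hardLookAhead (LNSsyn (Fin 4))) [] c ↔ c = (3, 0) := by
  obtain ⟨a, b⟩ := c
  constructor
  · intro h
    obtain ⟨hlns, hsucc⟩ := permits_hardLookAhead_iff.1 h
    have hsearch := (hasSuccessfulContinuation_lns_nGraph_iff _).1 (hsucc [] .refl hlns.2.1)
    rcases (permits_lns_nGraph_nil_iff _).1 hlns with hab | hab | hab <;>
      obtain ⟨rfl, rfl⟩ := Prod.mk.inj hab
    · exact absurd hsearch (by decide)
    · rfl
    · exact absurd hsearch (by decide)
  · rintro ⟨⟩
    refine permits_hardLookAhead_iff.2 ⟨(permits_lns_nGraph_nil_iff _).2 (by simp), ?_⟩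
    intro τ hτ _
    rw [eq_nil_of_epi_nil hτ, hasSuccessfulContinuation_lns_nGraph_iff]
    decide

lemma not_permits_hardLookAhead_lns_nGraph_30 (c : Fin 4 × Fin 4) :
    ¬ Permits nGraph (hardLookAhead (LNSsyn (Fin 4))) [(3, 0)] c := by
  obtain ⟨a, b⟩ := c
  intro h
  have p30 := (permits_lns_nGraph_nil_iff (3, 0)).2 (by simp)
  have p31 := (permits_lns_nGraph_nil_iff (3, 1)).2 (by simp)
  have hlns := (permits_hardLookAhead_iff.1 h).1
  rcases (permits_lns_nGraph_30_iff _).1 hlns with hab | hab | hab <;>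
    obtain ⟨rfl, rfl⟩ := Prod.mk.inj hab
  · refine not_permits_hardLookAhead_of_epi
      (.call_out .refl (fun _ => .rfl) (fun _ => .rfl) p30 p30) hlns.2.1 ?_ h
    rw [hasSuccessfulContinuation_lns_nGraph_iff]
    decide
  · refine not_permits_hardLookAhead_of_epi
      (.call_in .refl (fun _ => .rfl) (fun _ => .rfl) p30 p30) hlns.2.1 ?_ h
    rw [hasSuccessfulContinuation_lns_nGraph_iff]
    decide
  · refine not_permits_hardLookAhead_of_epi
      (.other .refl (by decide) (by decide) (by decide) (by decide) p31 p30)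
      (((represents_doCalls_nGraph _).1 _ _).2 (by decide)) ?_ h
    rw [hasSuccessfulContinuation_lns_nGraph_iff]
    decide

lemma not_permits_hardLookAhead_hardLookAhead_lns_nGraph_nil (c : Fin 4 × Fin 4) :
    ¬ Permits nGraph (hardLookAhead (hardLookAhead (LNSsyn (Fin 4)))) [] c := by
  obtain ⟨a, b⟩ := c
  intro h
  have hlns := (permits_hardLookAhead_iff.1 h).1
  obtain ⟨rfl, rfl⟩ := Prod.mk.inj ((permits_hardLookAhead_lns_nGraph_nil_iff _).1 hlns)
  refine not_permits_hardLookAhead_of_epi .refl hlns.2.1 (fun hsucc => ?_) h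
  have hexpert := hsucc.allExpert_of_terminal not_permits_hardLookAhead_lns_nGraph_30
  rw [(represents_doCalls_nGraph _).allExpert_iff] at hexpert
  exact absurd hexpert (by decide)

lemma extension_hardLookAhead_lns_nGraph :
    extension (hardLookAhead (LNSsyn (Fin 4))) nGraph = {[], [(3, 0)]} :=
  extension_eq_pair permits_hardLookAhead_lns_nGraph_nil_iff
    not_permits_hardLookAhead_lns_nGraph_30

lemma extension_hardLookAhead_hardLookAhead_lns_nGraph :
    extension (hardLookAhead (hardLookAhead (LNSsyn (Fin 4)))) nGraph = {[]} :=
  extension_eq_singleton_nil not_permits_hardLookAhead_hardLookAhead_lns_nGraph_nil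

/-- Hard look-ahead strengthening is not idempotent: on the "N" graph,
`LNS^■(G) = {ε, 30}` while `(LNS^■)^■(G) = {ε}`. -/
theorem hard_lookahead_not_idempotent :
    Initial nGraph ∧
    ([((3 : Fin 4), (0 : Fin 4))] ∈ extension (hardLookAhead (LNSsyn (Fin 4))) nGraph) ∧
    ([((3 : Fin 4), (0 : Fin 4))] ∉
      extension (hardLookAhead (hardLookAhead (LNSsyn (Fin 4)))) nGraph) ∧
    extension (hardLookAhead (LNSsyn (Fin 4))) nGraph =
      ({[], [((3 : Fin 4), (0 : Fin 4))]} : Set (List (Fin 4 × Fin 4))) ∧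
    extension (hardLookAhead (hardLookAhead (LNSsyn (Fin 4)))) nGraph =
      ({[]} : Set (List (Fin 4 × Fin 4))) ∧
    extension (hardLookAhead (LNSsyn (Fin 4))) nGraph ≠
      extension (hardLookAhead (hardLookAhead (LNSsyn (Fin 4)))) nGraph := by
  have h30_mem :
      [((3 : Fin 4), (0 : Fin 4))] ∈ extension (hardLookAhead (LNSsyn (Fin 4))) nGraph := by
    simp [extension_hardLookAhead_lns_nGraph]
  have h30_not_mem : [((3 : Fin 4), (0 : Fin 4))] ∉
      extension (hardLookAhead (hardLookAhead (LNSsyn (Fin 4)))) nGraph := by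
    simp [extension_hardLookAhead_hardLookAhead_lns_nGraph]
  exact ⟨fun _ _ => .rfl, h30_mem, h30_not_mem, extension_hardLookAhead_lns_nGraph,
    extension_hardLookAhead_hardLookAhead_lns_nGraph, fun h => h30_not_mem (h ▸ h30_mem)⟩

end Gossip
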